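/- In the setting of the previous structure theorem (equicontractive homothetic IFS with weak separation, maximal neighbourhood 𝒩₀, word 𝚋₀ and family 𝓕 ⊆ 𝒩₀ as in Claim on 𝚋₀), let 𝚒 ∈ Γ^ℕ and k ∈ ℕ be such that σ^{k−|𝚊₀𝚋₀|} 𝚒 ∈ [𝚊₀𝚋₀], and set k' = k − |𝚋₀|. Then for each f ∈ 𝒩₀, the set { 𝚊 ∈ Γ^k : φ_𝚊 = φ_{𝚒|_k} ∘ f } equals the disjoint union over h ∈ 𝓕 of the sets { 𝚋𝚌 : 𝚋 ∈ Γ^{k'}, 𝚌 ∈ Γ^{|𝚋₀|}, φ_𝚋 = φ_{𝚒|_{k'}} ∘ h, h ∘ φ_𝚌 = φ_{𝚋₀} ∘ f }; in particular the choices of 𝚋 and 𝚌 are independent. -/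

import Mathlib

open Metric

/-- Composition `φ_𝚊` along a finite word. -/
def wordMap {Γ α : Type*} (φ : Γ → α → α) : List Γ → α → α
  | [] => id
  | i :: a => φ i ∘ wordMap φ a

/-- The first `k` letters of an infinite word. -/
def wordOf {Γ : Type*} (i : ℕ → Γ) (k : ℕ) : List Γ := List.ofFn (fun j : Fin k => i j)

/-- The left shift on `Γ^ℕ`. -/
def shift {Γ : Type*} (i : ℕ → Γ) : ℕ → Γ := fun n => i (n + 1)

/-- Equicontractive neighbourhood system. -/
def nbhdE {Γ : Type*} {d : ℕ}
    (φ : Γ → EuclideanSpace ℝ (Fin d) → EuclideanSpace ℝ (Fin d))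
    (K : Set (EuclideanSpace ℝ (Fin d))) (a : List Γ) :
    Set (EuclideanSpace ℝ (Fin d) → EuclideanSpace ℝ (Fin d)) :=
  {f | ∃ b : List Γ, b.length = a.length ∧
    (wordMap φ b '' K ∩ wordMap φ a '' closedBall 0 1).Nonempty ∧
    wordMap φ a ∘ f = wordMap φ b}

open Function Set

/-! Let `w` have length `k` with `φ_w = φ_{𝚒|_k} ∘ f`. Since `𝚒|_k = 𝚒|_{k'} 𝚋₀`, splitting
`w = 𝚋𝚌` after `k'` letters and putting `h := φ_{𝚒|_{k'}}⁻¹ ∘ φ_𝚋` gives `h ∘ φ_𝚌 = φ_{𝚋₀} ∘ f`.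
Pick `x ∈ K` with `f x` in the closed unit ball `B`; then `h (φ_𝚌 x) = φ_{𝚋₀} (f x)` lies in
`h(K) ∩ φ_{𝚋₀}(B)`, and `φ_{𝚋₀}(B) ⊆ B`. Hence `h ∈ 𝒩(𝚒|_{k'})`, which equals `𝒩₀` because `𝚒|_{k'}` ends with `𝚊₀`
(so its neighbourhood set contains `𝒩₀`) and `𝒩₀` has maximal size; the same point shows
`h ∉ 𝒩₀ \ 𝓕`. Conversely every such `𝚋𝚌` works, and `𝚋`, being the first `k'` letters of `w`,
determines `h` since `φ_{𝚒|_{k'}}` is injective. -/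

section Words

variable {Γ α : Type*}

lemma wordMap_append (φ : Γ → α → α) (u v : List Γ) :
    wordMap φ (u ++ v) = wordMap φ u ∘ wordMap φ v := by
  induction u with
  | nil => rfl
  | cons x u ih => simp only [List.cons_append, wordMap, ih, comp_assoc]

lemma wordMap_bijective {φ : Γ → α → α} (hφ : ∀ i, Bijective (φ i)) (w : List Γ) :
    Bijective (wordMap φ w) := by
  induction w with
  | nil => exact bijective_id
  | cons x w ih => exact (hφ x).comp ih

lemma mapsTo_wordMap {φ : Γ → α → α} {s : Set α} (hφ : ∀ i, MapsTo (φ i) s s) (w : List Γ) :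
    MapsTo (wordMap φ w) s s := by
  induction w with
  | nil => exact mapsTo_id s
  | cons x w ih => exact (hφ x).comp ih

def factorWords (φ : Γ → α → α) (v u : List Γ) (f h : α → α) : Set (List Γ) :=
  {w | ∃ b c : List Γ, w = b ++ c ∧ b.length = v.length ∧ c.length = u.length ∧
    wordMap φ b = wordMap φ v ∘ h ∧ h ∘ wordMap φ c = wordMap φ u ∘ f}

lemma disjoint_factorWords {φ : Γ → α → α} {v u : List Γ} {f h₁ h₂ : α → α}
    (hv : Injective (wordMap φ v)) (hne : h₁ ≠ h₂) :
    Disjoint (factorWords φ v u f h₁) (factorWords φ v u f h₂) := by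
  rw [Set.disjoint_left]
  rintro w ⟨b₁, c₁, rfl, hb₁, -, hφb₁, -⟩ ⟨b₂, c₂, hw, hb₂, -, hφb₂, -⟩
  obtain rfl : b₁ = b₂ := (List.append_inj hw (hb₁.trans hb₂.symm)).1
  exact hne (funext fun x => hv (congrFun (hφb₁.symm.trans hφb₂) x))

end Words

section InfiniteWords

variable {Γ : Type*}

lemma wordOf_length (i : ℕ → Γ) (n : ℕ) : (wordOf i n).length = n := List.length_ofFn

lemma shift_iterate_apply (i : ℕ → Γ) (n j : ℕ) : shift^[n] i j = i (j + n) := by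
  induction n generalizing i with
  | zero => rfl
  | succ n ih => rw [iterate_succ_apply, ih]; simp only [shift, add_assoc]

lemma wordOf_add (i : ℕ → Γ) (n p : ℕ) :
    wordOf i (n + p) = wordOf i n ++ wordOf (shift^[n] i) p := by
  simp only [wordOf, List.ofFn_add, shift_iterate_apply, Fin.val_natAdd, Fin.val_castLE, add_comm]

lemma take_wordOf (i : ℕ → Γ) {p q : ℕ} (h : p ≤ q) : (wordOf i q).take p = wordOf i p := by
  apply List.ext_getElem
  · simp [wordOf_length, h]
  · intro j _ _
    simp [wordOf]

lemma wordOf_eq_append_of_cylinder {i : ℕ → Γ} {k : ℕ} {u v : List Γ} (hk : (u ++ v).length ≤ k)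
    (hcyl : wordOf (shift^[k - (u ++ v).length] i) (u ++ v).length = u ++ v) :
    wordOf i k = wordOf i (k - v.length) ++ v ∧ ∃ p, wordOf i (k - v.length) = p ++ u := by
  have hsplit : wordOf i k = wordOf i (k - (u ++ v).length) ++ (u ++ v) := by
    have := wordOf_add i (k - (u ++ v).length) (u ++ v).length
    rwa [Nat.sub_add_cancel hk, hcyl] at this
  have hlen : (wordOf i (k - (u ++ v).length) ++ u).length = k - v.length := by
    simp only [List.length_append, wordOf_length] at hk ⊢; omega
  have hprefix : wordOf i (k - v.length) = wordOf i (k - (u ++ v).length) ++ u := by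
    rw [← take_wordOf i (Nat.sub_le k v.length), hsplit, ← List.append_assoc, ← hlen,
      List.take_left]
  exact ⟨by rw [hsplit, hprefix, List.append_assoc], _, hprefix⟩

end InfiniteWords

section Homothety

variable {E : Type*} [NormedAddCommGroup E] [NormedSpace ℝ E]

lemma bijective_smul_add {ρ : ℝ} (hρ : ρ ≠ 0) (c : E) : Bijective fun x : E => ρ • x + c :=
  (Equiv.addRight c).bijective.comp (MulAction.bijective (Units.mk0 ρ hρ))

/-- The fixed point `p` of the homothety lies in `s ⊆ B(0,1)`, and `c = (1 - ρ) • p`. -/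
lemma mapsTo_closedBall_of_homothety {ρ : ℝ} (hρ : ρ ∈ Ioo (0 : ℝ) 1) (c : E) {s : Set E}
    (hsc : IsComplete s) (hne : s.Nonempty) (hs : MapsTo (fun x => ρ • x + c) s s)
    (hsub : s ⊆ ball 0 1) :
    MapsTo (fun x => ρ • x + c) (closedBall 0 1) (closedBall 0 1) := by
  have hcontr : ContractingWith ⟨ρ, hρ.1.le⟩ (fun x : E => ρ • x + c) := by
    refine ⟨hρ.2, LipschitzWith.of_dist_le_mul fun x y => ?_⟩
    simp only [dist_eq_norm, add_sub_add_right_eq_sub, ← smul_sub, norm_smul,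
      Real.norm_of_nonneg hρ.1.le]
    exact le_rfl
  obtain ⟨x, hx⟩ := hne
  obtain ⟨p, hps, hfix, -⟩ :=
    (hcontr.restrict hs).exists_fixedPoint' hsc hs hx (edist_ne_top _ _)
  have hc : c = (1 - ρ) • p := by
    rw [sub_smul, one_smul]
    exact eq_sub_of_add_eq' hfix.eq
  have hp : ‖p‖ ≤ 1 := (mem_ball_zero_iff.1 (hsub hps)).le
  intro y hy
  rw [mem_closedBall_zero_iff] at hy ⊢
  calc ‖ρ • y + c‖ ≤ ρ * ‖y‖ + (1 - ρ) * ‖p‖ := by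
        rw [hc]
        refine (norm_add_le _ _).trans_eq ?_
        rw [norm_smul, norm_smul, Real.norm_of_nonneg hρ.1.le,
          Real.norm_of_nonneg (sub_nonneg.2 hρ.2.le)]
    _ ≤ ρ * 1 + (1 - ρ) * 1 :=
        add_le_add (mul_le_mul_of_nonneg_left hy hρ.1.le)
          (mul_le_mul_of_nonneg_left hp (sub_nonneg.2 hρ.2.le))
    _ = 1 := by ring

end Homothety

section Neighbourhoods

variable {Γ : Type*} {d : ℕ} {φ : Γ → EuclideanSpace ℝ (Fin d) → EuclideanSpace ℝ (Fin d)}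
  {K : Set (EuclideanSpace ℝ (Fin d))}

lemma nbhdE_subset_nbhdE_append (u w : List Γ) : nbhdE φ K w ⊆ nbhdE φ K (u ++ w) := by
  rintro f ⟨b, hlen, ⟨x, hxb, hxw⟩, hcomp⟩
  refine ⟨u ++ b, by simp [hlen], ⟨wordMap φ u x, ?_, ?_⟩, ?_⟩
  · rw [wordMap_append, image_comp]; exact mem_image_of_mem _ hxb
  · rw [wordMap_append, image_comp]; exact mem_image_of_mem _ hxw
  · rw [wordMap_append, comp_assoc, hcomp, ← wordMap_append]

lemma nbhdE_append_eq_of_maximal (hfin : ∀ w : List Γ, (nbhdE φ K w).Finite) {a₀ : List Γ}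
    (hmax : ∀ w : List Γ, (nbhdE φ K w).ncard ≤ (nbhdE φ K a₀).ncard) (u : List Γ) :
    nbhdE φ K (u ++ a₀) = nbhdE φ K a₀ :=
  (eq_of_subset_of_ncard_le (nbhdE_subset_nbhdE_append u a₀) (hmax _) (hfin _)).symm

lemma mem_nbhdE_of_comp_eq {v b : List Γ}
    {h : EuclideanSpace ℝ (Fin d) → EuclideanSpace ℝ (Fin d)} {y : EuclideanSpace ℝ (Fin d)}
    (hlen : b.length = v.length)
    (hcomp : wordMap φ v ∘ h = wordMap φ b) (hy : y ∈ K) (hhy : h y ∈ closedBall 0 1) :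
    h ∈ nbhdE φ K v :=
  ⟨b, hlen, ⟨_, ⟨y, hy, (congrFun hcomp y).symm⟩, ⟨h y, hhy, rfl⟩⟩, hcomp⟩

lemma exists_mem_closedBall_of_mem_nbhdE {a : List Γ}
    {f : EuclideanSpace ℝ (Fin d) → EuclideanSpace ℝ (Fin d)}
    (ha : Injective (wordMap φ a)) (hf : f ∈ nbhdE φ K a) :
    ∃ x ∈ K, f x ∈ closedBall 0 1 := by
  obtain ⟨b, -, ⟨_, ⟨x, hx, rfl⟩, ⟨z, hz, hzx⟩⟩, hcomp⟩ := hf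
  refine ⟨x, hx, ?_⟩
  rwa [ha (hzx.trans (congrFun hcomp x).symm)] at hz

end Neighbourhoods

section ExactOverlaps

variable {Γ : Type*} {d : ℕ} {φ : Γ → EuclideanSpace ℝ (Fin d) → EuclideanSpace ℝ (Fin d)}
  {K : Set (EuclideanSpace ℝ (Fin d))}
  {N F : Set (EuclideanSpace ℝ (Fin d) → EuclideanSpace ℝ (Fin d))}
  {v b₀ : List Γ} {f : EuclideanSpace ℝ (Fin d) → EuclideanSpace ℝ (Fin d)}
  {x₀ : EuclideanSpace ℝ (Fin d)}

lemma exists_mem_factorWords_of_wordMap_eq (hbij : ∀ j, Bijective (φ j))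
    (hK : ∀ j, MapsTo (φ j) K K) (hB : ∀ j, MapsTo (φ j) (closedBall 0 1) (closedBall 0 1))
    (hN : nbhdE φ K v = N) (hmiss : ∀ h ∈ N \ F, wordMap φ b₀ '' closedBall 0 1 ∩ h '' K = ∅)
    (hx₀ : x₀ ∈ K) (hfx₀ : f x₀ ∈ closedBall 0 1) {w : List Γ}
    (hlen : w.length = (v ++ b₀).length) (hw : wordMap φ w = wordMap φ (v ++ b₀) ∘ f) :
    ∃ h ∈ F, w ∈ factorWords φ v b₀ f h := by
  let ψ := Equiv.ofBijective (wordMap φ v) (wordMap_bijective hbij v)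
  set b := w.take v.length
  set c := w.drop v.length
  let h := ψ.symm ∘ wordMap φ b
  have hb : wordMap φ b = wordMap φ v ∘ h := funext fun x => (ψ.apply_symm_apply _).symm
  have hc : h ∘ wordMap φ c = wordMap φ b₀ ∘ f := by
    refine funext fun x => ψ.injective ?_
    have := congrFun hw x
    rw [← List.take_append_drop v.length w, wordMap_append, wordMap_append] at this
    simpa [h, ψ] using this
  have hy : wordMap φ c x₀ ∈ K := mapsTo_wordMap hK c hx₀
  have hhy : h (wordMap φ c x₀) = wordMap φ b₀ (f x₀) := congrFun hc x₀
  have hhN : h ∈ N :=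
    hN ▸ mem_nbhdE_of_comp_eq (by simp [b, hlen]) hb.symm hy
      (hhy ▸ mapsTo_wordMap hB b₀ hfx₀)
  have hhF : h ∈ F := by
    by_contra hhF
    exact (hmiss h ⟨hhN, hhF⟩).subset ⟨⟨f x₀, hfx₀, rfl⟩, ⟨_, hy, hhy⟩⟩
  refine ⟨h, hhF, b, c, (List.take_append_drop _ w).symm, by simp [b, hlen], ?_, hb, hc⟩
  simp [c, hlen]

lemma setOf_wordMap_eq_comp_eq_biUnion (hbij : ∀ j, Bijective (φ j))
    (hK : ∀ j, MapsTo (φ j) K K) (hB : ∀ j, MapsTo (φ j) (closedBall 0 1) (closedBall 0 1))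
    (hN : nbhdE φ K v = N) (hmiss : ∀ h ∈ N \ F, wordMap φ b₀ '' closedBall 0 1 ∩ h '' K = ∅)
    (hx₀ : x₀ ∈ K) (hfx₀ : f x₀ ∈ closedBall 0 1) :
    {w : List Γ | w.length = (v ++ b₀).length ∧ wordMap φ w = wordMap φ (v ++ b₀) ∘ f} =
      ⋃ h ∈ F, factorWords φ v b₀ f h := by
  ext w
  simp only [mem_ofPred_eq, mem_iUnion, exists_prop]
  constructor
  · rintro ⟨hlen, hw⟩
    exact exists_mem_factorWords_of_wordMap_eq hbij hK hB hN hmiss hx₀ hfx₀ hlen hw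
  · rintro ⟨h, -, b, c, rfl, hb, hc, hφb, hφc⟩
    refine ⟨by simp [hb, hc], ?_⟩
    rw [wordMap_append, hφb, comp_assoc, hφc, ← comp_assoc, ← wordMap_append]

end ExactOverlaps

theorem stmt11_general {Γ : Type*} {d : ℕ}
    (ρ : ℝ) (hρ : ρ ∈ Set.Ioo (0 : ℝ) 1) (a : Γ → EuclideanSpace ℝ (Fin d))
    (φ : Γ → EuclideanSpace ℝ (Fin d) → EuclideanSpace ℝ (Fin d))
    (hφ : ∀ i x, φ i x = ρ • x + a i)
    (K : Set (EuclideanSpace ℝ (Fin d))) (hKc : IsCompact K)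
    (hattr : K = ⋃ i, φ i '' K) (hKball : K ⊆ ball 0 1)
    (hfin : ∀ w : List Γ, (nbhdE φ K w).Finite)
    (a₀ : List Γ) (hmax : ∀ w : List Γ, (nbhdE φ K w).ncard ≤ (nbhdE φ K a₀).ncard)
    (b₀ : List Γ) (F : Set (EuclideanSpace ℝ (Fin d) → EuclideanSpace ℝ (Fin d)))
    (hmiss : ∀ h ∈ nbhdE φ K a₀ \ F,
      wordMap φ b₀ '' closedBall 0 1 ∩ h '' K = ∅)
    (i : ℕ → Γ) (k : ℕ) (hk : (a₀ ++ b₀).length ≤ k)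
    (hcyl : wordOf (shift^[k - (a₀ ++ b₀).length] i) ((a₀ ++ b₀).length) = a₀ ++ b₀) :
    ∀ f ∈ nbhdE φ K a₀,
      ({w : List Γ | w.length = k ∧ wordMap φ w = wordMap φ (wordOf i k) ∘ f} =
        ⋃ h ∈ F, {w : List Γ | ∃ b c : List Γ, w = b ++ c ∧
          b.length = k - b₀.length ∧ c.length = b₀.length ∧
          wordMap φ b = wordMap φ (wordOf i (k - b₀.length)) ∘ h ∧
          h ∘ wordMap φ c = wordMap φ b₀ ∘ f}) ∧
      (∀ h₁ ∈ F, ∀ h₂ ∈ F, h₁ ≠ h₂ →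
        Disjoint
          {w : List Γ | ∃ b c : List Γ, w = b ++ c ∧
            b.length = k - b₀.length ∧ c.length = b₀.length ∧
            wordMap φ b = wordMap φ (wordOf i (k - b₀.length)) ∘ h₁ ∧
            h₁ ∘ wordMap φ c = wordMap φ b₀ ∘ f}
          {w : List Γ | ∃ b c : List Γ, w = b ++ c ∧
            b.length = k - b₀.length ∧ c.length = b₀.length ∧
            wordMap φ b = wordMap φ (wordOf i (k - b₀.length)) ∘ h₂ ∧
            h₂ ∘ wordMap φ c = wordMap φ b₀ ∘ f}) := by
  obtain rfl : φ = fun j x => ρ • x + a j := funext₂ hφ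
  intro f hf
  have hbij j := bijective_smul_add hρ.1.ne' (a j)
  have hK j : MapsTo (fun x => ρ • x + a j) K K := fun x hx =>
    hattr ▸ mem_iUnion_of_mem j ⟨x, hx, rfl⟩
  obtain ⟨x₀, hx₀, hfx₀⟩ :=
    exists_mem_closedBall_of_mem_nbhdE (wordMap_bijective hbij a₀).injective hf
  have hB j := mapsTo_closedBall_of_homothety hρ (a j) hKc.isComplete ⟨x₀, hx₀⟩ (hK j) hKball
  obtain ⟨hsplit, p, hp⟩ := wordOf_eq_append_of_cylinder hk hcyl
  have hN := hp ▸ nbhdE_append_eq_of_maximal hfin hmax p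
  have hunion := setOf_wordMap_eq_comp_eq_biUnion hbij hK hB hN hmiss hx₀ hfx₀
  have hdisj : ∀ h₁ ∈ F, ∀ h₂ ∈ F, h₁ ≠ h₂ → Disjoint
      (factorWords _ (wordOf i (k - b₀.length)) b₀ f h₁) (factorWords _ _ b₀ f h₂) :=
    fun _ _ _ _ => disjoint_factorWords (wordMap_bijective hbij _).injective
  rw [← hsplit] at hunion
  simp only [factorWords, wordOf_length] at hunion hdisj
  exact ⟨hunion, hdisj⟩

/-- **Partition of exact overlaps.** In the setting of the structure theorem for the
maximal neighbourhood system (`𝚋₀`, `𝓕 ⊆ 𝒩₀`), if `𝚒|_k` ends with `𝚊₀𝚋₀` and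
`k' = k − |𝚋₀|`, then for each `f ∈ 𝒩₀` the set `{𝚊 ∈ Γ^k : φ_𝚊 = φ_{𝚒|_k} ∘ f}`
is the disjoint union over `h ∈ 𝓕` of
`{𝚋𝚌 : 𝚋 ∈ Γ^{k'}, 𝚌 ∈ Γ^{|𝚋₀|}, φ_𝚋 = φ_{𝚒|_{k'}} ∘ h, h ∘ φ_𝚌 = φ_{𝚋₀} ∘ f}`. -/
theorem stmt11 {Γ : Type*} [Fintype Γ] [Nonempty Γ] {d : ℕ}
    (ρ : ℝ) (hρ : ρ ∈ Set.Ioo (0 : ℝ) 1) (a : Γ → EuclideanSpace ℝ (Fin d))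
    (φ : Γ → EuclideanSpace ℝ (Fin d) → EuclideanSpace ℝ (Fin d))
    (hφ : ∀ i x, φ i x = ρ • x + a i)
    (K : Set (EuclideanSpace ℝ (Fin d))) (hKc : IsCompact K) (hKne : K.Nonempty)
    (hattr : K = ⋃ i, φ i '' K) (hKball : K ⊆ ball 0 1)
    (hfin : ∀ w : List Γ, (nbhdE φ K w).Finite)
    (a₀ : List Γ) (hmax : ∀ w : List Γ, (nbhdE φ K w).ncard ≤ (nbhdE φ K a₀).ncard)
    (b₀ : List Γ) (F : Set (EuclideanSpace ℝ (Fin d) → EuclideanSpace ℝ (Fin d)))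
    (hF : F ⊆ nbhdE φ K a₀) (hb₀ : nbhdE φ K b₀ = nbhdE φ K a₀)
    (hdesc : ∀ h ∈ F, ∃ bh : List Γ,
      h ∘ wordMap φ bh = wordMap φ b₀ ∧ nbhdE φ K bh = nbhdE φ K a₀)
    (hmiss : ∀ h ∈ nbhdE φ K a₀ \ F,
      wordMap φ b₀ '' closedBall 0 1 ∩ h '' K = ∅)
    (i : ℕ → Γ) (k : ℕ) (hk : (a₀ ++ b₀).length ≤ k)
    (hcyl : wordOf (shift^[k - (a₀ ++ b₀).length] i) ((a₀ ++ b₀).length) = a₀ ++ b₀) :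
    ∀ f ∈ nbhdE φ K a₀,
      ({w : List Γ | w.length = k ∧ wordMap φ w = wordMap φ (wordOf i k) ∘ f} =
        ⋃ h ∈ F, {w : List Γ | ∃ b c : List Γ, w = b ++ c ∧
          b.length = k - b₀.length ∧ c.length = b₀.length ∧
          wordMap φ b = wordMap φ (wordOf i (k - b₀.length)) ∘ h ∧
          h ∘ wordMap φ c = wordMap φ b₀ ∘ f}) ∧
      (∀ h₁ ∈ F, ∀ h₂ ∈ F, h₁ ≠ h₂ →
        Disjoint
          {w : List Γ | ∃ b c : List Γ, w = b ++ c ∧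
            b.length = k - b₀.length ∧ c.length = b₀.length ∧
            wordMap φ b = wordMap φ (wordOf i (k - b₀.length)) ∘ h₁ ∧
            h₁ ∘ wordMap φ c = wordMap φ b₀ ∘ f}
          {w : List Γ | ∃ b c : List Γ, w = b ++ c ∧
            b.length = k - b₀.length ∧ c.length = b₀.length ∧
            wordMap φ b = wordMap φ (wordOf i (k - b₀.length)) ∘ h₂ ∧
            h₂ ∘ wordMap φ c = wordMap φ b₀ ∘ f}) :=
  stmt11_general ρ hρ a φ hφ K hKc hattr hKball hfin a₀ hmax b₀ F hmiss i k hk hcyl
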